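/- arXiv:1005.5386 — 10 statements merged into one kernel-verified Lean document; each statement's English description precedes it below -/
import Mathlib

section
/- Let M be a real 3×3 matrix with det M ≠ 0. Then the map R ↦ R·M restricts to a bijection from the set {R ∈ SO(3) : R·M is symmetric} onto the set {B : B is a symmetric real 3×3 matrix with det B = det M and B·B = Mᵗ·M}. -/
open Matrix

/-- For det M ≠ 0, R ↦ R·M is a bijection from critical points of τ_M in SO(3)
onto symmetric matrices B with det B = det M and B² = MᵗM. -/
theorem critical_points_bijOn (M : Matrix (Fin 3) (Fin 3) ℝ) (hM : M.det ≠ 0) :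
    Set.BijOn (fun R => R * M)
      {R : Matrix (Fin 3) (Fin 3) ℝ | Rᵀ * R = 1 ∧ R.det = 1 ∧ (R * M)ᵀ = R * M}
      {B : Matrix (Fin 3) (Fin 3) ℝ | Bᵀ = B ∧ B.det = M.det ∧ B * B = Mᵀ * M} := by
  refine ⟨?_, ?_, ?_⟩
  · rintro R ⟨hO, hdet, hsym⟩
    refine ⟨hsym, ?_, ?_⟩
    · simp [Matrix.det_mul, hdet]
    · calc (R * M) * (R * M) = (R * M)ᵀ * (R * M) := by rw [hsym]
        _ = Mᵀ * (Rᵀ * R) * M := by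
            rw [Matrix.transpose_mul]; noncomm_ring
        _ = Mᵀ * M := by rw [hO, Matrix.mul_one]
  · rintro R1 _ R2 _ h
    have h' : R1 * M = R2 * M := h
    have : R1 * M * M⁻¹ = R2 * M * M⁻¹ := by rw [h']
    rwa [Matrix.mul_assoc, Matrix.mul_assoc, Matrix.mul_nonsing_inv M hM.isUnit,
      Matrix.mul_one, Matrix.mul_one] at this
  · rintro B ⟨hBs, hBdet, hBB⟩
    refine ⟨B * M⁻¹, ⟨?_, ?_, ?_⟩, ?_⟩
    · calc (B * M⁻¹)ᵀ * (B * M⁻¹) = M⁻¹ᵀ * (Bᵀ * B) * M⁻¹ := by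
            rw [Matrix.transpose_mul, Matrix.mul_assoc, Matrix.mul_assoc, Matrix.mul_assoc]
        _ = M⁻¹ᵀ * (Mᵀ * M) * M⁻¹ := by rw [hBs, hBB]
        _ = (M * M⁻¹)ᵀ * (M * M⁻¹) := by
            rw [Matrix.transpose_mul]; noncomm_ring
        _ = 1 := by rw [Matrix.mul_nonsing_inv M hM.isUnit]; simp
    · rw [Matrix.det_mul, hBdet, Matrix.det_nonsing_inv, Ring.mul_inverse_cancel _ hM.isUnit]
    · have : B * M⁻¹ * M = B := by
        rw [Matrix.mul_assoc, Matrix.nonsing_inv_mul M hM.isUnit, Matrix.mul_one]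
      rw [this, hBs]
    · simp only []
      rw [Matrix.mul_assoc, Matrix.nonsing_inv_mul M hM.isUnit, Matrix.mul_one]
end

section
/- Let M be a real 3×3 matrix with det M > 0, and let μ₁ ≥ μ₂ ≥ μ₃ > 0 be the eigenvalues of Mᵗ·M. If R₀ ∈ SO(3) is such that R₀·M is symmetric, then Tr(R₀·M) belongs to the four-element list {√μ₁+√μ₂+√μ₃, √μ₁−√μ₂−√μ₃, −√μ₁+√μ₂−√μ₃, −√μ₁−√μ₂+√μ₃}. -/
open Matrix Polynomial

/-!
`S = R₀ M` is symmetric with `S² = MᵀM`, so the squares of its eigenvalues `a, b, c` have the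
same elementary symmetric functions as `μ₁, μ₂, μ₃`, and `abc = det M > 0`, whence
`abc = √μ₁ √μ₂ √μ₃`. For any `x, y, z`, the four sums `±x ± y ± z` with an even number of minus
signs are the roots of `t⁴ - 2e₁t² - 8xyz t + e₁² - 4e₂`, with `e₁, e₂` the elementary symmetric
functions of `x², y², z²`. This quartic is the same for `(a, b, c)` and `(√μ₁, √μ₂, √μ₃)`, and
`a + b + c` is one of its roots.
-/

theorem Polynomial.esymm₃_eq_of_prod_X_sub_C_eq {R : Type*} [CommRing R] {a b c x y z : R}
    (h : (X - C a) * (X - C b) * (X - C c) = (X - C x) * (X - C y) * (X - C z)) :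
    a + b + c = x + y + z ∧ a * b + b * c + c * a = x * y + y * z + z * x ∧
      a * b * c = x * y * z := by
  have expand : ∀ a b c : R, (X - C a) * (X - C b) * (X - C c) =
      X ^ 3 - C (a + b + c) * X ^ 2 + C (a * b + b * c + c * a) * X - C (a * b * c) := by
    intro a b c
    simp only [map_add, map_mul]
    ring
  rw [expand, expand] at h
  have h₂ := congrArg (coeff · 2) h
  have h₁ := congrArg (coeff · 1) h
  have h₀ := congrArg (coeff · 0) h
  simp only [coeff_add, coeff_sub, coeff_X_pow, coeff_C_mul_X_pow, coeff_C_mul_X, coeff_C]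
    at h₂ h₁ h₀
  norm_num at h₂ h₁ h₀
  exact ⟨by linear_combination -h₂, by linear_combination h₁, by linear_combination h₀⟩

theorem nonneg_of_esymm₃_nonneg {R : Type*} [CommRing R] [LinearOrder R] [IsStrictOrderedRing R]
    {x y z : R} (h₁ : 0 ≤ x + y + z) (h₂ : 0 ≤ x * y + y * z + z * x) (h₃ : 0 ≤ x * y * z) :
    0 ≤ x ∧ 0 ≤ y ∧ 0 ≤ z := by
  have key : ∀ x y z : R, 0 ≤ x + y + z → 0 ≤ x * y + y * z + z * x → 0 ≤ x * y * z → 0 ≤ x := by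
    intro x y z h₁ h₂ h₃
    by_contra! hx
    nlinarith [mul_pos_of_neg_of_neg hx hx]
  exact ⟨key x y z h₁ h₂ h₃, key y z x (by linarith) (by linarith) (by linarith),
    key z x y (by linarith) (by linarith) (by linarith)⟩

theorem add_add_eq_of_sq_esymm₃_eq {R : Type*} [CommRing R] [NoZeroDivisors R] {a b c x y z : R}
    (h₁ : a ^ 2 + b ^ 2 + c ^ 2 = x ^ 2 + y ^ 2 + z ^ 2)
    (h₂ : a ^ 2 * b ^ 2 + b ^ 2 * c ^ 2 + c ^ 2 * a ^ 2 =
      x ^ 2 * y ^ 2 + y ^ 2 * z ^ 2 + z ^ 2 * x ^ 2)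
    (h₃ : a * b * c = x * y * z) :
    a + b + c = x + y + z ∨ a + b + c = x - y - z ∨ a + b + c = -x + y - z ∨
      a + b + c = -x - y + z := by
  set t := a + b + c
  have : (t - (x + y + z)) * (t - (x - y - z)) * (t - (-x + y - z)) * (t - (-x - y + z)) = 0 := by
    linear_combination
      (2 * t ^ 2 - (a ^ 2 + b ^ 2 + c ^ 2) - (x ^ 2 + y ^ 2 + z ^ 2)) * h₁ + 4 * h₂ + 8 * t * h₃
  simp only [mul_eq_zero, sub_eq_zero] at this
  tauto

theorem add_add_eq_of_prod_X_sub_C_sq_eq {a b c μ₁ μ₂ μ₃ : ℝ}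
    (h : (X - C (a ^ 2)) * (X - C (b ^ 2)) * (X - C (c ^ 2)) =
      (X - C μ₁) * (X - C μ₂) * (X - C μ₃))
    (habc : 0 < a * b * c) :
    a + b + c = √μ₁ + √μ₂ + √μ₃ ∨ a + b + c = √μ₁ - √μ₂ - √μ₃ ∨
      a + b + c = -√μ₁ + √μ₂ - √μ₃ ∨ a + b + c = -√μ₁ - √μ₂ + √μ₃ := by
  obtain ⟨e₁, e₂, e₃⟩ := esymm₃_eq_of_prod_X_sub_C_eq h
  obtain ⟨hμ₁, hμ₂, hμ₃⟩ : 0 ≤ μ₁ ∧ 0 ≤ μ₂ ∧ 0 ≤ μ₃ :=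
    nonneg_of_esymm₃_nonneg (by rw [← e₁]; positivity) (by rw [← e₂]; positivity)
      (by rw [← e₃]; positivity)
  have hprod : a * b * c = √μ₁ * √μ₂ * √μ₃ := by
    refine (pow_left_inj₀ habc.le (by positivity) two_ne_zero).mp ?_
    simp only [mul_pow, Real.sq_sqrt, hμ₁, hμ₂, hμ₃]
    exact e₃
  apply add_add_eq_of_sq_esymm₃_eq _ _ hprod <;>
    rw [Real.sq_sqrt hμ₁, Real.sq_sqrt hμ₂, Real.sq_sqrt hμ₃]
  · exact e₁
  · simpa only [mul_pow] using e₂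

theorem Matrix.mul_sq_eq_transpose_mul_self {n α : Type*} [Fintype n] [DecidableEq n]
    [CommSemiring α] {R M : Matrix n n α} (hR : Rᵀ * R = 1) (hsymm : (R * M)ᵀ = R * M) :
    (R * M) ^ 2 = Mᵀ * M := by
  calc (R * M) ^ 2 = (R * M)ᵀ * (R * M) := by rw [sq, hsymm]
    _ = Mᵀ * (Rᵀ * R) * M := by simp only [transpose_mul, Matrix.mul_assoc]
    _ = Mᵀ * M := by rw [hR, Matrix.mul_one]

theorem Matrix.IsHermitian.charpoly_sq {n 𝕜 : Type*} [Fintype n] [DecidableEq n] [RCLike 𝕜]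
    {A : Matrix n n 𝕜} (hA : A.IsHermitian) :
    (A ^ 2).charpoly = ∏ i, (X - C ((hA.eigenvalues i ^ 2 : ℝ) : 𝕜)) := by
  rw [← cfc_pow_id (R := ℝ) A 2 hA.isSelfAdjoint, hA.charpoly_cfc_eq]

theorem critical_values_det_pos_general (M : Matrix (Fin 3) (Fin 3) ℝ) (hM : 0 < M.det)
    (μ₁ μ₂ μ₃ : ℝ)
    (hchar : (Mᵀ * M).charpoly = (X - C μ₁) * (X - C μ₂) * (X - C μ₃))
    (R₀ : Matrix (Fin 3) (Fin 3) ℝ) (hR : R₀ᵀ * R₀ = 1) (hRdet : R₀.det = 1)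
    (hsymm : (R₀ * M)ᵀ = R₀ * M) :
    Matrix.trace (R₀ * M) = Real.sqrt μ₁ + Real.sqrt μ₂ + Real.sqrt μ₃ ∨
    Matrix.trace (R₀ * M) = Real.sqrt μ₁ - Real.sqrt μ₂ - Real.sqrt μ₃ ∨
    Matrix.trace (R₀ * M) = -Real.sqrt μ₁ + Real.sqrt μ₂ - Real.sqrt μ₃ ∨
    Matrix.trace (R₀ * M) = -Real.sqrt μ₁ - Real.sqrt μ₂ + Real.sqrt μ₃ := by
  have hS : (R₀ * M).IsHermitian := by
    rwa [IsHermitian, conjTranspose_eq_transpose_of_trivial]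
  have hsq_char := hS.charpoly_sq
  rw [mul_sq_eq_transpose_mul_self hR hsymm, hchar, Fin.prod_univ_three] at hsq_char
  have hdet := hS.det_eq_prod_eigenvalues
  rw [det_mul, hRdet, one_mul, Fin.prod_univ_three] at hdet
  rw [hS.trace_eq_sum_eigenvalues, Fin.sum_univ_three]
  simp only [RCLike.ofReal_real_eq_id, id] at hsq_char hdet ⊢
  exact add_add_eq_of_prod_X_sub_C_sq_eq hsq_char.symm (hdet ▸ hM)

/-- Critical values of τ_M when det M > 0. -/
theorem critical_values_det_pos (M : Matrix (Fin 3) (Fin 3) ℝ) (hM : 0 < M.det)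
    (μ₁ μ₂ μ₃ : ℝ) (hμ : μ₁ ≥ μ₂ ∧ μ₂ ≥ μ₃ ∧ μ₃ > 0)
    (hchar : (Mᵀ * M).charpoly = (X - C μ₁) * (X - C μ₂) * (X - C μ₃))
    (R₀ : Matrix (Fin 3) (Fin 3) ℝ) (hR : R₀ᵀ * R₀ = 1) (hRdet : R₀.det = 1)
    (hsymm : (R₀ * M)ᵀ = R₀ * M) :
    Matrix.trace (R₀ * M) = Real.sqrt μ₁ + Real.sqrt μ₂ + Real.sqrt μ₃ ∨
    Matrix.trace (R₀ * M) = Real.sqrt μ₁ - Real.sqrt μ₂ - Real.sqrt μ₃ ∨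
    Matrix.trace (R₀ * M) = -Real.sqrt μ₁ + Real.sqrt μ₂ - Real.sqrt μ₃ ∨
    Matrix.trace (R₀ * M) = -Real.sqrt μ₁ - Real.sqrt μ₂ + Real.sqrt μ₃ :=
  critical_values_det_pos_general M hM μ₁ μ₂ μ₃ hchar R₀ hR hRdet hsymm
end

section
/- Let M be a real 3×3 matrix with det M < 0, and let μ₁ ≥ μ₂ ≥ μ₃ > 0 be the eigenvalues of Mᵗ·M. If R₀ ∈ SO(3) is such that R₀·M is symmetric, then Tr(R₀·M) belongs to the four-element list {√μ₁+√μ₂−√μ₃, √μ₁−√μ₂+√μ₃, −√μ₁+√μ₂+√μ₃, −√μ₁−√μ₂−√μ₃}. -/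
open Matrix Polynomial

lemma eval_charpoly3 (A : Matrix (Fin 3) (Fin 3) ℝ) (x : ℝ) :
    A.charpoly.eval x = (x • (1 : Matrix (Fin 3) (Fin 3) ℝ) - A).det := by
  rw [Matrix.charpoly, ← coe_evalRingHom, RingHom.map_det]
  congr 1
  ext i j
  rcases eq_or_ne i j with rfl | hij
  · simp [Matrix.charmatrix_apply, Matrix.one_apply]
  · simp [Matrix.charmatrix_apply, Matrix.one_apply, hij, Matrix.diagonal_apply]

/-- Critical values of τ_M when det M < 0. -/
theorem critical_values_det_neg (M : Matrix (Fin 3) (Fin 3) ℝ) (hM : M.det < 0)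
    (μ₁ μ₂ μ₃ : ℝ) (hμ : μ₁ ≥ μ₂ ∧ μ₂ ≥ μ₃ ∧ μ₃ > 0)
    (hchar : (Mᵀ * M).charpoly = (X - C μ₁) * (X - C μ₂) * (X - C μ₃))
    (R₀ : Matrix (Fin 3) (Fin 3) ℝ) (hR : R₀ᵀ * R₀ = 1) (hRdet : R₀.det = 1)
    (hsymm : (R₀ * M)ᵀ = R₀ * M) :
    Matrix.trace (R₀ * M) = Real.sqrt μ₁ + Real.sqrt μ₂ - Real.sqrt μ₃ ∨
    Matrix.trace (R₀ * M) = Real.sqrt μ₁ - Real.sqrt μ₂ + Real.sqrt μ₃ ∨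
    Matrix.trace (R₀ * M) = -Real.sqrt μ₁ + Real.sqrt μ₂ + Real.sqrt μ₃ ∨
    Matrix.trace (R₀ * M) = -Real.sqrt μ₁ - Real.sqrt μ₂ - Real.sqrt μ₃ := by
  set S := R₀ * M with hSdef
  have hS2 : S * S = Mᵀ * M := by
    calc S * S = (R₀ * M)ᵀ * (R₀ * M) := by rw [hsymm]
    _ = Mᵀ * (R₀ᵀ * R₀) * M := by simp [Matrix.transpose_mul, Matrix.mul_assoc]
    _ = Mᵀ * M := by rw [hR, Matrix.mul_one]
  have hdetS : S.det = M.det := by rw [hSdef, Matrix.det_mul, hRdet, one_mul]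
  -- coefficients of charpoly of S
  set P := S.charpoly with hP
  have hdeg : P.natDegree = 3 := by
    rw [hP, S.charpoly_natDegree_eq_dim]; rfl
  have hc3 : P.coeff 3 = 1 := by
    have := S.charpoly_monic
    rw [← hdeg]; exact this.coeff_natDegree
  set T := Matrix.trace S with hT
  set d := M.det with hd
  set p := P.coeff 1 with hp
  have hc2 : P.coeff 2 = -T := by
    have := S.trace_eq_neg_charpoly_coeff
    simp at this
    rw [hT, this]; ring
  have hc0 : P.coeff 0 = -d := by
    have h := S.det_eq_sign_charpoly_coeff
    rw [hdetS] at h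
    norm_num at h
    linarith
  have heval : ∀ x : ℝ, P.eval x = x^3 - T*x^2 + p*x - d := by
    intro x
    rw [Polynomial.eval_eq_sum_range' (by omega : P.natDegree < 4)]
    simp [Finset.sum_range_succ, hc3, hc2, hc0]
    ring
  have hmul : ∀ y : ℝ, (y • (1 : Matrix (Fin 3) (Fin 3) ℝ) - S) * (y • 1 + S)
      = (y^2) • (1 : Matrix (Fin 3) (Fin 3) ℝ) - S * S := by
    intro y
    rw [sub_mul, mul_add, mul_add, smul_mul_assoc, one_mul, mul_smul_comm, mul_one,
      smul_mul_assoc, one_mul, smul_smul]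
    rw [show y * y = y^2 by ring]
    abel
  have hE : ∀ y : ℝ, (y^2 - μ₁) * (y^2 - μ₂) * (y^2 - μ₃)
      = (y^3 - T*y^2 + p*y - d) * (y^3 + T*y^2 + p*y + d) := by
    intro y
    have h1 : (y^2 - μ₁) * (y^2 - μ₂) * (y^2 - μ₃)
        = ((Mᵀ * M).charpoly).eval (y^2) := by rw [hchar]; simp
    rw [h1, ← hS2, eval_charpoly3, ← hmul, Matrix.det_mul, ← eval_charpoly3, heval]
    have h2 : (y • (1 : Matrix (Fin 3) (Fin 3) ℝ) + S)
        = -(((-y) • (1 : Matrix (Fin 3) (Fin 3) ℝ)) - S) := by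
      rw [neg_sub, neg_smul]; abel
    rw [h2, Matrix.det_neg, ← eval_charpoly3, heval]
    simp only [Fintype.card_fin]
    ring
  -- extract symmetric function relations
  have h0 : μ₁ * μ₂ * μ₃ = d^2 := by linear_combination -(hE 0)
  have hA : μ₁ + μ₂ + μ₃ = T^2 - 2*p := by
    linear_combination (1/3)*(hE 1) - (1/12)*(hE 2) + (1/4)*h0
  have hB : μ₁*μ₂ + μ₁*μ₃ + μ₂*μ₃ = p^2 - 2*T*d := by
    linear_combination (hE 1) + h0 + hA
  have hq : (T^2 - (μ₁ + μ₂ + μ₃))^2 - 8*T*d - 4*(μ₁*μ₂ + μ₁*μ₃ + μ₂*μ₃) = 0 := by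
    linear_combination ((μ₁ + μ₂ + μ₃) - T^2 - 2*p)*hA - 4*hB
  -- square roots
  obtain ⟨h12, h23, h3⟩ := hμ
  have hμ3 : (0:ℝ) < μ₃ := h3
  have hμ2 : (0:ℝ) < μ₂ := lt_of_lt_of_le hμ3 h23
  have hμ1 : (0:ℝ) < μ₁ := lt_of_lt_of_le hμ2 h12
  set s1 := Real.sqrt μ₁ with hs1def
  set s2 := Real.sqrt μ₂ with hs2def
  set s3 := Real.sqrt μ₃ with hs3def
  have hs1 : s1^2 = μ₁ := Real.sq_sqrt hμ1.le
  have hs2 : s2^2 = μ₂ := Real.sq_sqrt hμ2.le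
  have hs3 : s3^2 = μ₃ := Real.sq_sqrt hμ3.le
  have hs1p : 0 < s1 := Real.sqrt_pos.mpr hμ1
  have hs2p : 0 < s2 := Real.sqrt_pos.mpr hμ2
  have hs3p : 0 < s3 := Real.sqrt_pos.mpr hμ3
  have hdneg : d = -(s1*s2*s3) := by
    have hsq : (d - s1*s2*s3) * (d + s1*s2*s3) = 0 := by
      linear_combination -h0 - (s2^2*s3^2)*hs1 - (μ₁*s3^2)*hs2 - (μ₁*μ₂)*hs3
    rcases mul_eq_zero.mp hsq with h | h
    · exfalso; nlinarith [mul_pos (mul_pos hs1p hs2p) hs3p]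
    · linarith
  rw [← hs1, ← hs2, ← hs3, hdneg] at hq
  have hfac : (T - (s1 + s2 - s3)) * (T - (s1 - s2 + s3)) * (T - (-s1 + s2 + s3))
      * (T - (-s1 - s2 - s3)) = 0 := by linear_combination hq
  have goal : T = s1 + s2 - s3 ∨ T = s1 - s2 + s3 ∨ T = -s1 + s2 + s3 ∨ T = -s1 - s2 - s3 := by
    rcases mul_eq_zero.mp hfac with h | h
    · rcases mul_eq_zero.mp h with h | h
      · rcases mul_eq_zero.mp h with h | h
        · exact Or.inl (by linarith [sub_eq_zero.mp h])
        · exact Or.inr (Or.inl (by linarith [sub_eq_zero.mp h]))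
      · exact Or.inr (Or.inr (Or.inl (by linarith [sub_eq_zero.mp h])))
    · exact Or.inr (Or.inr (Or.inr (by linarith [sub_eq_zero.mp h])))
  exact goal
end

section
/- Let M be a real 3×3 matrix with det M ≠ 0, and let μ₁ ≥ μ₂ ≥ μ₃ > 0 be the eigenvalues of Mᵗ·M. Then for every choice of signs s₁, s₂, s₃ ∈ {+1, −1} whose product s₁·s₂·s₃ equals the sign of det M, there exists R₀ ∈ SO(3) such that R₀·M is symmetric and Tr(R₀·M) = s₁√μ₁ + s₂√μ₂ + s₃√μ₃. -/
/-!
Let `μ i` be the eigenvalues of `MᵀM`, with orthonormal eigenvectors `u i`. Attaching the sign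
`s i` to the eigenvector `u i` gives a symmetric matrix `S = ∑ s i √(μ i) u i u iᵀ` with `S² = MᵀM`,
trace `∑ s i √(μ i)` and determinant `s₁ s₂ s₃ √(μ₁ μ₂ μ₃)`. Then `R₀ = S M⁻¹` satisfies
`R₀ᵀ R₀ = M⁻ᵀ S² M⁻¹ = 1` and `R₀ M = S`. Since `(det S)² = (det M)²` and the sign condition makes
`det S` and `det M` have the same sign, `det S = det M`, so `det R₀ = 1`.
-/

open Matrix Polynomial

theorem Fintype.exists_equiv_of_map_univ_eq {α β γ : Type*} [Fintype α] [Fintype β]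
    {f : α → γ} {g : β → γ}
    (h : Multiset.map f Finset.univ.val = Multiset.map g Finset.univ.val) :
    ∃ e : α ≃ β, ∀ a, g (e a) = f a := by
  classical
  have hcard (c : γ) : Fintype.card {a // f a = c} = Fintype.card {b // g b = c} := by
    simpa [Multiset.count_map, Fintype.card_subtype, Finset.card, Finset.filter_val, eq_comm]
      using congrArg (Multiset.count c) h
  exact ⟨Equiv.ofFiberEquiv fun c => Fintype.equivOfCardEq (hcard c), Equiv.ofFiberEquiv_map _⟩

theorem Matrix.IsSymm.transpose_mul_inv_mul_self {R n : Type*} [CommRing R] [Fintype n]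
    [DecidableEq n] {S M : Matrix n n R} (hS : S.IsSymm) (hM : IsUnit M.det)
    (hSS : S * S = Mᵀ * M) : (S * M⁻¹)ᵀ * (S * M⁻¹) = 1 := by
  have hMt : IsUnit Mᵀ.det := by rwa [det_transpose]
  calc (S * M⁻¹)ᵀ * (S * M⁻¹) = Mᵀ⁻¹ * (S * S) * M⁻¹ := by
        rw [transpose_mul, hS.eq, transpose_nonsing_inv]
        simp only [Matrix.mul_assoc]
    _ = 1 := by
        rw [hSS, ← Matrix.mul_assoc Mᵀ⁻¹, nonsing_inv_mul _ hMt, Matrix.one_mul,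
          mul_nonsing_inv _ hM]

theorem Real.eq_of_mul_self_eq_of_eq_sign_mul {a b p : ℝ} (hb : b ≠ 0) (hp : 0 < p)
    (ha : a = Real.sign b * p) (h : a * a = b * b) : a = b := by
  rcases hb.lt_or_gt with hb | hb
  · rw [Real.sign_of_neg hb] at ha
    nlinarith
  · rw [Real.sign_of_pos hb] at ha
    nlinarith

namespace Matrix.IsHermitian

variable {n : Type*} [Fintype n] [DecidableEq n]

theorem exists_perm_eigenvalues_eq {𝕜 : Type*} [RCLike 𝕜] {A : Matrix n n 𝕜}
    (hA : A.IsHermitian) {μ : n → ℝ} (h : A.charpoly = ∏ i, (X - C (μ i : 𝕜))) :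
    ∃ σ : Equiv.Perm n, ∀ i, hA.eigenvalues (σ i) = μ i := by
  have hroots : A.charpoly.roots = Multiset.map (RCLike.ofReal ∘ μ) Finset.univ.val := by
    rw [h, roots_prod _ _ (Finset.prod_ne_zero_iff.mpr fun i _ => X_sub_C_ne_zero _)]
    simp
  obtain ⟨σ, hσ⟩ := Fintype.exists_equiv_of_map_univ_eq
    (hroots.symm.trans hA.roots_charpoly_eq_eigenvalues)
  exact ⟨σ, fun i => RCLike.ofReal_inj.mp (hσ i)⟩

variable {A : Matrix n n ℝ}

/-- The signs sit on eigenvectors, not on eigenvalues: a repeated eigenvalue may get both signs,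
so this is not a continuous functional calculus of `A`. -/
noncomputable def signedSqrt (hA : A.IsHermitian) (t : n → ℝ) : Matrix n n ℝ :=
  Unitary.conjStarAlgAut ℝ _ hA.eigenvectorUnitary (diagonal fun i => t i * √(hA.eigenvalues i))

variable (hA : A.IsHermitian) (t : n → ℝ)

theorem isSymm_signedSqrt : (hA.signedSqrt t).IsSymm := by
  rw [IsSymm, ← conjTranspose_eq_transpose_of_trivial, ← star_eq_conjTranspose, signedSqrt,
    ← map_star, star_eq_conjTranspose, diagonal_conjTranspose]
  simp

theorem trace_signedSqrt : (hA.signedSqrt t).trace = ∑ i, t i * √(hA.eigenvalues i) := by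
  rw [signedSqrt, Unitary.conjStarAlgAut_apply, trace_mul_cycle, Unitary.coe_star_mul_self,
    Matrix.one_mul, trace_diagonal]

theorem det_signedSqrt : (hA.signedSqrt t).det = ∏ i, t i * √(hA.eigenvalues i) := by
  rw [signedSqrt, Unitary.conjStarAlgAut_apply, det_conj_of_mul_eq_one
    (Unitary.coe_mul_star_self _) (Unitary.coe_star_mul_self _), det_diagonal]

end Matrix.IsHermitian

theorem Matrix.PosSemidef.signedSqrt_mul_self {n : Type*} [Fintype n] [DecidableEq n]
    {A : Matrix n n ℝ} (hA : A.PosSemidef) {t : n → ℝ} (ht : ∀ i, t i ^ 2 = 1) :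
    hA.1.signedSqrt t * hA.1.signedSqrt t = A := by
  have hsq (i : n) : t i * √(hA.1.eigenvalues i) * (t i * √(hA.1.eigenvalues i)) =
      hA.1.eigenvalues i := by
    rw [mul_mul_mul_comm, ← sq, ht, one_mul, Real.mul_self_sqrt (hA.eigenvalues_nonneg i)]
  conv_rhs => rw [hA.1.spectral_theorem]
  rw [IsHermitian.signedSqrt, ← map_mul, diagonal_mul_diagonal]
  simp only [hsq, RCLike.ofReal_real_eq_id, Function.id_comp]

/-- Every admissible sign combination is realized by a critical point of τ_M. -/
theorem critical_values_realized (M : Matrix (Fin 3) (Fin 3) ℝ) (hM : M.det ≠ 0)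
    (μ₁ μ₂ μ₃ : ℝ) (hμ : μ₁ ≥ μ₂ ∧ μ₂ ≥ μ₃ ∧ μ₃ > 0)
    (hchar : (Mᵀ * M).charpoly = (X - C μ₁) * (X - C μ₂) * (X - C μ₃))
    (s₁ s₂ s₃ : ℝ) (hs₁ : s₁ = 1 ∨ s₁ = -1) (hs₂ : s₂ = 1 ∨ s₂ = -1)
    (hs₃ : s₃ = 1 ∨ s₃ = -1) (hsprod : s₁ * s₂ * s₃ = Real.sign M.det) :
    ∃ R₀ : Matrix (Fin 3) (Fin 3) ℝ, R₀ᵀ * R₀ = 1 ∧ R₀.det = 1 ∧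
      (R₀ * M)ᵀ = R₀ * M ∧
      Matrix.trace (R₀ * M) =
        s₁ * Real.sqrt μ₁ + s₂ * Real.sqrt μ₂ + s₃ * Real.sqrt μ₃ := by
  obtain ⟨hμ₁₂, hμ₂₃, hμ₃⟩ := hμ
  have hA : (Mᵀ * M).PosSemidef := by
    simpa only [conjTranspose_eq_transpose_of_trivial] using posSemidef_conjTranspose_mul_self M
  obtain ⟨σ, hσ⟩ := hA.1.exists_perm_eigenvalues_eq (μ := ![μ₁, μ₂, μ₃])
    (by rw [hchar, Fin.prod_univ_three]; rfl)
  set s : Fin 3 → ℝ := ![s₁, s₂, s₃]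
  have hs (j : Fin 3) : s j ^ 2 = 1 := by
    fin_cases j <;> simp [s, sq_eq_one_iff, hs₁, hs₂, hs₃]
  set S := hA.1.signedSqrt (s ∘ σ.symm)
  have hSS : S * S = Mᵀ * M := hA.signedSqrt_mul_self fun i => hs _
  have hdetS : S.det = Real.sign M.det * (√μ₁ * √μ₂ * √μ₃) := by
    rw [IsHermitian.det_signedSqrt, ← hsprod, ← Equiv.prod_comp σ]
    simp only [Function.comp_apply, Equiv.symm_apply_apply, hσ, Fin.prod_univ_three, s,
      Matrix.cons_val]
    ring
  have hdet : S.det = M.det := Real.eq_of_mul_self_eq_of_eq_sign_mul hM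
    (mul_pos (mul_pos (Real.sqrt_pos.2 (by linarith)) (Real.sqrt_pos.2 (by linarith)))
      (Real.sqrt_pos.2 hμ₃))
    hdetS (by rw [← det_mul, hSS, det_mul, det_transpose])
  have hMunit : IsUnit M.det := hM.isUnit
  have hRM : S * M⁻¹ * M = S := nonsing_inv_mul_cancel_right _ _ hMunit
  refine ⟨S * M⁻¹, (hA.1.isSymm_signedSqrt _).transpose_mul_inv_mul_self hMunit hSS, ?_,
    by rw [hRM, (hA.1.isSymm_signedSqrt _).eq], ?_⟩
  · rw [det_mul, hdet, det_nonsing_inv, Ring.mul_inverse_cancel _ hMunit]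
  · rw [hRM, IsHermitian.trace_signedSqrt, ← Equiv.sum_comp σ]
    simp [hσ, Fin.sum_univ_three, s]
end

section
/- Let B be a symmetric real 3×3 matrix with eigenvalues λ₁, λ₂, λ₃ (with multiplicity). Then the symmetric bilinear form (ξ, ζ) ↦ (1/2)·Tr((ξ·ζ + ζ·ξ)·B) on the space of skew-symmetric real 3×3 matrices is nondegenerate (i.e. if ξ is skew-symmetric and Tr((ξ·ζ + ζ·ξ)·B) = 0 for all skew-symmetric ζ, then ξ = 0) if and only if λ₁+λ₂ ≠ 0, λ₁+λ₃ ≠ 0 and λ₂+λ₃ ≠ 0. -/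
open Matrix Polynomial

/-!
Every skew-symmetric `3 × 3` matrix is `hat u` for a unique `u : Fin 3 → ℝ`, and
`hat u * hat v = v uᵀ - (u ⬝ v) I`. For symmetric `B` this turns the form into
`Tr((hat u * hat v + hat v * hat u) B) = 2 vᵀ (B - Tr B • I) u`, so it is nondegenerate iff
`det (B - Tr B • I) ≠ 0`. Evaluating the characteristic polynomial at `Tr B = λ₁ + λ₂ + λ₃`
gives `det (B - Tr B • I) = -(λ₂ + λ₃)(λ₁ + λ₃)(λ₁ + λ₂)`.
-/

section

variable {R : Type*} [CommRing R]

-- `hat u *ᵥ w = u ⨯₃ w`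
def hat (u : Fin 3 → R) : Matrix (Fin 3) (Fin 3) R :=
  !![0, -u 2, u 1; u 2, 0, -u 0; -u 1, u 0, 0]

lemma hat_injective : Function.Injective (hat : (Fin 3 → R) → Matrix (Fin 3) (Fin 3) R) := by
  intro u v h
  have h := fun i j => congrFun (congrFun h i) j
  funext i
  fin_cases i
  · simpa [hat] using h 2 1
  · simpa [hat] using h 0 2
  · simpa [hat] using h 1 0

@[simp]
lemma hat_eq_zero_iff {u : Fin 3 → R} : hat u = 0 ↔ u = 0 :=
  hat_injective.eq_iff' <| by ext i j; fin_cases i <;> fin_cases j <;> simp [hat]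

lemma transpose_hat (u : Fin 3 → R) : (hat u)ᵀ = -hat u := by
  ext i j; fin_cases i <;> fin_cases j <;> simp [hat]

lemma exists_hat_eq_of_transpose_eq_neg [NoZeroDivisors R] [CharZero R]
    {ξ : Matrix (Fin 3) (Fin 3) R} (hξ : ξᵀ = -ξ) : ∃ u, hat u = ξ := by
  have h i j : ξ j i = -ξ i j := congrFun (congrFun hξ i) j
  have hdiag i : ξ i i = 0 := CharZero.eq_neg_self_iff.mp (h i i)
  refine ⟨![ξ 2 1, ξ 0 2, ξ 1 0], ?_⟩
  ext i j
  fin_cases i <;> fin_cases j <;> simp [hat, hdiag, h 0 1, h 0 2, h 1 2]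

lemma forall_transpose_eq_neg_iff [NoZeroDivisors R] [CharZero R]
    {P : Matrix (Fin 3) (Fin 3) R → Prop} : (∀ ξ, ξᵀ = -ξ → P ξ) ↔ ∀ u, P (hat u) := by
  refine ⟨fun h u => h _ (transpose_hat u), fun h ξ hξ => ?_⟩
  obtain ⟨u, rfl⟩ := exists_hat_eq_of_transpose_eq_neg hξ
  exact h u

lemma hat_mul_hat (u v : Fin 3 → R) : hat u * hat v = vecMulVec v u - (u ⬝ᵥ v) • 1 := by
  ext i j
  fin_cases i <;> fin_cases j <;>
    simp [hat, vecMulVec_apply, dotProduct, Fin.sum_univ_three, mul_apply, one_apply] <;> ring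

lemma trace_hat_mul_hat_add_mul (B : Matrix (Fin 3) (Fin 3) R) (hB : Bᵀ = B)
    (u v : Fin 3 → R) :
    trace ((hat u * hat v + hat v * hat u) * B) = 2 * (v ⬝ᵥ (B - trace B • 1) *ᵥ u) := by
  have hvecMul w : w ᵥ* B = B *ᵥ w := by rw [← mulVec_transpose, hB]
  have hsym : u ⬝ᵥ B *ᵥ v = v ⬝ᵥ B *ᵥ u := by
    rw [dotProduct_mulVec, hvecMul, dotProduct_comm]
  simp only [hat_mul_hat, add_mul, sub_mul, smul_mul, one_mul, trace_add, trace_sub, trace_smul,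
    vecMulVec_mul, trace_vecMulVec, sub_mulVec, smul_mulVec, one_mulVec, dotProduct_sub,
    dotProduct_smul, smul_eq_mul, dotProduct_comm u v, hvecMul, hsym]
  ring

lemma trace_eq_of_charpoly_eq (B : Matrix (Fin 3) (Fin 3) R) {a b c : R}
    (hchar : B.charpoly = (X - C a) * (X - C b) * (X - C c)) : trace B = a + b + c := by
  have hcoeff : ((X - C a) * (X - C b) * (X - C c)).coeff 2 = -(a + b + c) := by
    have : (X - C a) * (X - C b) * (X - C c) =
        X ^ 3 - C (a + b + c) * X ^ 2 + C (a * b + a * c + b * c) * X - C (a * b * c) := by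
      simp only [C_add, C_mul]; ring
    rw [this]
    simp [coeff_X_pow, -map_add]
  rw [trace_eq_neg_charpoly_coeff, hchar, Fintype.card_fin, hcoeff, neg_neg]

lemma det_sub_trace_smul_one_of_charpoly_eq (B : Matrix (Fin 3) (Fin 3) R)
    {a b c : R} (hchar : B.charpoly = (X - C a) * (X - C b) * (X - C c)) :
    (B - trace B • 1).det = -((b + c) * (a + c) * (a + b)) := by
  have h := eval_charpoly B (trace B)
  rw [← neg_sub, det_neg, Fintype.card_fin, smul_one_eq_diagonal, ← scalar_apply, ← h, hchar,
    trace_eq_of_charpoly_eq B hchar]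
  simp only [eval_mul, eval_sub, eval_X, eval_C]
  ring

end

/-- The Hessian bilinear form is nondegenerate iff no two eigenvalues of B sum to zero. -/
theorem hessian_nondegenerate_iff (B : Matrix (Fin 3) (Fin 3) ℝ) (hsymm : Bᵀ = B)
    (lam₁ lam₂ lam₃ : ℝ)
    (hchar : B.charpoly = (X - C lam₁) * (X - C lam₂) * (X - C lam₃)) :
    (∀ ξ : Matrix (Fin 3) (Fin 3) ℝ, ξᵀ = -ξ →
        (∀ ζ : Matrix (Fin 3) (Fin 3) ℝ, ζᵀ = -ζ →
          Matrix.trace ((ξ * ζ + ζ * ξ) * B) = 0) → ξ = 0) ↔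
    (lam₁ + lam₂ ≠ 0 ∧ lam₁ + lam₃ ≠ 0 ∧ lam₂ + lam₃ ≠ 0) := by
  have hform : (∀ ξ : Matrix (Fin 3) (Fin 3) ℝ, ξᵀ = -ξ →
      (∀ ζ : Matrix (Fin 3) (Fin 3) ℝ, ζᵀ = -ζ → trace ((ξ * ζ + ζ * ξ) * B) = 0) → ξ = 0) ↔
      (B - trace B • 1).SeparatingRight := by
    simp only [forall_transpose_eq_neg_iff, trace_hat_mul_hat_add_mul B hsymm, hat_eq_zero_iff,
      mul_eq_zero, two_ne_zero, false_or, separatingRight_def]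
  rw [hform, separatingRight_iff_det_ne_zero, det_sub_trace_smul_one_of_charpoly_eq B hchar]
  simp only [ne_eq, neg_eq_zero, mul_eq_zero, not_or]
  tauto
end

section
/- Let M be a real 3×3 matrix with det M ≠ 0. Suppose B and B' are symmetric real 3×3 matrices satisfying B·B = B'·B' = Mᵗ·M, det B = det B' = det M, and Tr B = Tr B', and suppose the eigenvalues λ₁, λ₂, λ₃ of B satisfy λᵢ + λⱼ ≠ 0 for all i ≠ j. Then B = B'. Equivalently, under these nondegeneracy conditions, to each critical value of τ_M there corresponds exactly one critical point in SO(3). -/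
open Matrix Polynomial

lemma charpoly_fin3 (N : Matrix (Fin 3) (Fin 3) ℝ) :
    N.charpoly = X ^ 3 - C (N 0 0 + N 1 1 + N 2 2) * X ^ 2
      + C (N 0 0 * N 1 1 - N 0 1 * N 1 0 + N 0 0 * N 2 2 - N 0 2 * N 2 0
          + N 1 1 * N 2 2 - N 1 2 * N 2 1) * X
      - C (N.det) := by
  rw [Matrix.charpoly, Matrix.det_fin_three, Matrix.det_fin_three]
  simp [charmatrix_apply, Matrix.one_apply, Fin.ext_iff]
  ring

lemma expand3 (a b c : ℝ) :
    (X - C a) * (X - C b) * (X - C c) =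
      X ^ 3 - C (a + b + c) * X ^ 2 + C (a * b + a * c + b * c) * X - C (a * b * c) := by
  simp only [map_add, _root_.map_mul]
  ring

lemma ch_of_charpoly (N : Matrix (Fin 3) (Fin 3) ℝ) (e₁ e₂ e₃ : ℝ)
    (h : N.charpoly = X ^ 3 - C e₁ * X ^ 2 + C e₂ * X - C e₃) :
    N * N * N = e₁ • (N * N) - e₂ • N + e₃ • 1 := by
  have H := N.aeval_self_charpoly
  rw [h] at H
  simp only [map_sub, map_add, _root_.map_mul, aeval_X_pow, aeval_C, aeval_X,
    Algebra.algebraMap_eq_smul_one, smul_mul_assoc, one_mul, pow_succ, pow_zero] at H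
  linear_combination (norm := module) H

lemma c_entry_eq (N : Matrix (Fin 3) (Fin 3) ℝ) :
    N 0 0 * N 1 1 - N 0 1 * N 1 0 + N 0 0 * N 2 2 - N 0 2 * N 2 0
      + N 1 1 * N 2 2 - N 1 2 * N 2 1
    = ((N 0 0 + N 1 1 + N 2 2) ^ 2 - Matrix.trace (N * N)) / 2 := by
  simp [Matrix.trace_fin_three, Matrix.mul_apply, Fin.sum_univ_three]
  ring

/-- In the nondegenerate case, to each critical value of τ_M there corresponds exactly
one critical point: two symmetric square roots of MᵗM with the same determinant and
trace coincide. -/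
theorem unique_critical_point (M : Matrix (Fin 3) (Fin 3) ℝ) (hM : M.det ≠ 0)
    (B B' : Matrix (Fin 3) (Fin 3) ℝ)
    (hBsymm : Bᵀ = B) (hB'symm : B'ᵀ = B')
    (hBsq : B * B = Mᵀ * M) (hB'sq : B' * B' = Mᵀ * M)
    (hBdet : B.det = M.det) (hB'det : B'.det = M.det)
    (htr : Matrix.trace B = Matrix.trace B')
    (lam₁ lam₂ lam₃ : ℝ)
    (hchar : B.charpoly = (X - C lam₁) * (X - C lam₂) * (X - C lam₃))
    (h12 : lam₁ + lam₂ ≠ 0) (h13 : lam₁ + lam₃ ≠ 0) (h23 : lam₂ + lam₃ ≠ 0) :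
    B = B' := by
  set e₁ := lam₁ + lam₂ + lam₃ with he₁
  set e₂ := lam₁ * lam₂ + lam₁ * lam₃ + lam₂ * lam₃ with he₂
  set e₃ := lam₁ * lam₂ * lam₃ with he₃
  have hcharB : B.charpoly = X ^ 3 - C e₁ * X ^ 2 + C e₂ * X - C e₃ :=
    hchar.trans (expand3 _ _ _)
  have heq := (charpoly_fin3 B).symm.trans hcharB
  have hco2 := congrArg (fun p => p.coeff 2) heq
  have hco1 := congrArg (fun p => p.coeff 1) heq
  have hco0 := congrArg (fun p => p.coeff 0) heq
  simp only [coeff_sub, coeff_add, coeff_C_mul, coeff_X_pow, coeff_C, coeff_X] at hco2 hco1 hco0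
  norm_num at hco2 hco1 hco0
  have hco2' : B 0 0 + B 1 1 + B 2 2 = e₁ := by linarith
  -- hco2 : B 0 0 + B 1 1 + B 2 2 = e₁, hco1 : c(B) = e₂, hco0 : B.det = e₃
  have hsq : B' * B' = B * B := hB'sq.trans hBsq.symm
  have htrB : B 0 0 + B 1 1 + B 2 2 = Matrix.trace B := by
    simp [Matrix.trace_fin_three]
  have htrB' : B' 0 0 + B' 1 1 + B' 2 2 = Matrix.trace B' := by
    simp [Matrix.trace_fin_three]
  have htrs : B' 0 0 + B' 1 1 + B' 2 2 = e₁ := by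
    rw [htrB', ← htr, ← htrB]; exact hco2'
  have hcB' : B' 0 0 * B' 1 1 - B' 0 1 * B' 1 0 + B' 0 0 * B' 2 2 - B' 0 2 * B' 2 0
      + B' 1 1 * B' 2 2 - B' 1 2 * B' 2 1 = e₂ := by
    rw [c_entry_eq, hsq, htrs, ← hco1, c_entry_eq, hco2']
  have hdetB' : B'.det = e₃ := by rw [hB'det, ← hBdet]; exact hco0
  have hcharB' : B'.charpoly = X ^ 3 - C e₁ * X ^ 2 + C e₂ * X - C e₃ := by
    rw [charpoly_fin3, htrs, hcB', hdetB']
  have hB3 := ch_of_charpoly B e₁ e₂ e₃ hcharB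
  have hB'3 := ch_of_charpoly B' e₁ e₂ e₃ hcharB'
  have h1 : B * (Mᵀ * M) = e₁ • (Mᵀ * M) - e₂ • B + e₃ • 1 := by
    rw [← hBsq, ← mul_assoc]; exact hB3
  have h1' : B' * (Mᵀ * M) = e₁ • (Mᵀ * M) - e₂ • B' + e₃ • 1 := by
    rw [← hB'sq, ← mul_assoc, hB'3, hsq, hBsq]
  have h2 : (Mᵀ * M) * B = e₁ • (Mᵀ * M) - e₂ • B + e₃ • 1 := by
    rw [← hBsq]; exact hB3
  have key1 : (B - B') * (Mᵀ * M + e₂ • 1) = 0 := by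
    rw [sub_mul, mul_add, mul_add, h1, h1']
    simp only [mul_smul_comm, mul_one]
    module
  have key2 : (Mᵀ * M + e₂ • 1) * (e₁ • 1 - B) = (e₁ * e₂ - e₃) • 1 := by
    rw [add_mul, mul_sub, mul_sub, h2]
    simp only [smul_mul_assoc, mul_smul_comm, one_mul, mul_one, smul_smul]
    module
  have hzero : (e₁ * e₂ - e₃) • (B - B') = 0 := by
    calc (e₁ * e₂ - e₃) • (B - B') = (B - B') * ((e₁ * e₂ - e₃) • 1) := by
          rw [mul_smul_comm, mul_one]
      _ = (B - B') * ((Mᵀ * M + e₂ • 1) * (e₁ • 1 - B)) := by rw [key2]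
      _ = ((B - B') * (Mᵀ * M + e₂ • 1)) * (e₁ • 1 - B) := by rw [mul_assoc]
      _ = 0 := by rw [key1, zero_mul]
  have hpi : e₁ * e₂ - e₃ ≠ 0 := by
    have : e₁ * e₂ - e₃ = (lam₁ + lam₂) * (lam₁ + lam₃) * (lam₂ + lam₃) := by
      rw [he₁, he₂, he₃]; ring
    rw [this]
    exact mul_ne_zero (mul_ne_zero h12 h13) h23
  have := (smul_eq_zero.mp hzero).resolve_left hpi
  exact sub_eq_zero.mp this
end

section
/- Let λ₁, λ₂, λ₃ be real numbers with λᵢ + λⱼ ≠ 0 for all i ≠ j, let D = diag(λ₁, λ₂, λ₃), and let C ∈ SO(3) satisfy C·D²·C⁻¹ = D². Then C·D·C⁻¹ = D. -/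
open Matrix

lemma key_zero (x y a : ℝ) (h : x + y ≠ 0) (hE : a * (y * y) = x * x * a) :
    a * (y - x) = 0 := by
  have h1 : (a * (y - x)) * (y + x) = 0 := by linear_combination hE
  rcases mul_eq_zero.mp h1 with h2 | h2
  · exact h2
  · exact absurd (by linarith) h

/-- If C ∈ SO(3) commutes with D² for a diagonal D with λᵢ + λⱼ ≠ 0 (i ≠ j),
then C commutes with D. -/
theorem conj_diag_sq_eq_imp_conj_diag_eq (lam₁ lam₂ lam₃ : ℝ)
    (h12 : lam₁ + lam₂ ≠ 0) (h13 : lam₁ + lam₃ ≠ 0) (h23 : lam₂ + lam₃ ≠ 0)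
    (D : Matrix (Fin 3) (Fin 3) ℝ) (hD : D = Matrix.diagonal ![lam₁, lam₂, lam₃])
    (C : Matrix (Fin 3) (Fin 3) ℝ) (hC : Cᵀ * C = 1) (hCdet : C.det = 1)
    (hsq : C * D ^ 2 * C⁻¹ = D ^ 2) :
    C * D * C⁻¹ = D := by
  have hdet : IsUnit C.det := by rw [hCdet]; exact isUnit_one
  have hsq' : C * D ^ 2 = D ^ 2 * C := by
    calc C * D ^ 2 = C * D ^ 2 * (C⁻¹ * C) := by
          rw [nonsing_inv_mul C hdet, mul_one]
      _ = (C * D ^ 2 * C⁻¹) * C := by rw [mul_assoc, mul_assoc, mul_assoc]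
      _ = D ^ 2 * C := by rw [hsq]
  have hcomm : C * D = D * C := by
    subst hD
    ext i j
    have h := congrFun (congrFun hsq' i) j
    simp only [pow_two, Matrix.diagonal_mul_diagonal, Matrix.mul_diagonal,
      Matrix.diagonal_mul] at h ⊢
    fin_cases i <;> fin_cases j <;> simp_all
    · ring
    · linear_combination key_zero lam₁ lam₂ _ h12 h
    · linear_combination key_zero lam₁ lam₃ _ h13 h
    · linear_combination key_zero lam₂ lam₁ _ (fun hh => h12 (by linarith)) h
    · ring
    · linear_combination key_zero lam₂ lam₃ _ h23 h
    · linear_combination key_zero lam₃ lam₁ _ (fun hh => h13 (by linarith)) h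
    · linear_combination key_zero lam₃ lam₂ _ (fun hh => h23 (by linarith)) h
    · ring
  calc C * D * C⁻¹ = D * (C * C⁻¹) := by rw [hcomm, mul_assoc]
    _ = D := by rw [mul_nonsing_inv C hdet, mul_one]
end

section
/- Let M be a real 3×3 matrix with det M ≥ 0, and let μ₁ ≥ μ₂ ≥ μ₃ ≥ 0 be the eigenvalues of Mᵗ·M. Then Tr(R·M) ≤ √μ₁ + √μ₂ + √μ₃ for every R ∈ SO(3), and there exists R ∈ SO(3) for which equality holds; i.e. the maximum of τ_M over SO(3) equals √μ₁ + √μ₂ + √μ₃. -/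
/-!
Write `M = U Σ Wᵀ` (singular value decomposition) with `U, W` orthogonal and `Σ` diagonal with
entries `σᵢ = √μᵢ`. Then `Tr (R M) = Tr (Q Σ)` for the orthogonal matrix `Q = Wᵀ R U`, whose
diagonal entries are at most `1`, so `Tr (R M) ≤ ∑ σᵢ`. Equality holds for `R = W Uᵀ` when
`det U · det W = 1`. Otherwise `0 ≤ det M = -∏ σᵢ` forces some `σⱼ = 0`, and `R = W F Uᵀ` with `F`
the reflection in the `j`-th coordinate fixes the determinant without changing the trace.
-/

namespace Matrix

variable {n : Type*} [Fintype n] [DecidableEq n]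

theorem transpose_mem_orthogonalGroup {U : Matrix n n ℝ} (hU : U ∈ orthogonalGroup n ℝ) :
    Uᵀ ∈ orthogonalGroup n ℝ := by
  rw [mem_orthogonalGroup_iff, transpose_transpose, ← mem_orthogonalGroup_iff']
  exact hU

theorem det_eq_one_or_neg_one_of_mem_orthogonalGroup {U : Matrix n n ℝ}
    (hU : U ∈ orthogonalGroup n ℝ) : U.det = 1 ∨ U.det = -1 := by
  have h := congrArg det ((mem_orthogonalGroup_iff' n ℝ).mp hU)
  rw [det_mul, det_transpose, det_one] at h
  exact mul_self_eq_one_iff.mp h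

theorem exists_orthogonal_eq_mul_diagonal_sqrt {C : Matrix n n ℝ} {d : n → ℝ}
    (hC : Cᵀ * C = diagonal d) :
    ∃ U ∈ orthogonalGroup n ℝ, C = U * diagonal (fun i => √(d i)) := by
  let c : n → EuclideanSpace ℝ n := fun i => WithLp.toLp 2 (fun k => C k i)
  have hc : ∀ i j, inner ℝ (c i) (c j) = diagonal d i j := fun i j => by
    simp only [c, EuclideanSpace.inner_toLp_toLp, ← hC, mul_apply, dotProduct, star_trivial,
      transpose_apply, mul_comm]
  have hzero : ∀ i, d i = 0 → c i = 0 := fun i hi =>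
    inner_self_eq_zero.mp (by rw [hc, diagonal_apply_eq, hi])
  have hsqrt : ∀ i, √(d i) * √(d i) = d i := fun i => by
    apply Real.mul_self_sqrt
    rw [← diagonal_apply_eq d i, ← hc]
    exact real_inner_self_nonneg
  -- the nonzero columns, normalised, form an orthonormal family; extend it to a basis
  let v : n → EuclideanSpace ℝ n := fun i => (√(d i))⁻¹ • c i
  have hv : Orthonormal ℝ ({i | d i ≠ 0}.domRestrict v) := by
    rw [orthonormal_iff_ite]
    rintro ⟨i, hi⟩ ⟨j, hj⟩
    simp only [Set.domRestrict_apply, v, real_inner_smul_left, real_inner_smul_right, hc,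
      Subtype.mk.injEq]
    by_cases hij : i = j
    · subst hij
      rw [diagonal_apply_eq, if_pos rfl, ← mul_assoc, ← mul_inv, hsqrt, inv_mul_cancel₀ hi]
    · rw [diagonal_apply_ne _ hij, if_neg hij, mul_zero, mul_zero]
  obtain ⟨b, hb⟩ := hv.exists_orthonormalBasis_extension_of_card_eq (by simp)
  refine ⟨(EuclideanSpace.basisFun n ℝ).toBasis.toMatrix b,
    (EuclideanSpace.basisFun n ℝ).toMatrix_orthonormalBasis_mem_orthogonal b, ?_⟩
  ext k i
  rw [mul_diagonal]
  simp only [Module.Basis.toMatrix_apply, OrthonormalBasis.coe_toBasis_repr_apply,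
    EuclideanSpace.basisFun_repr]
  by_cases hi : d i = 0
  · have hCi : C k i = 0 := congrArg (·.ofLp k) (hzero i hi)
    rw [hCi, hi, Real.sqrt_zero, mul_zero]
  · have hsi : √(d i) ≠ 0 := fun h => hi (by rw [← hsqrt i, h, mul_zero])
    rw [hb i hi]
    simp only [v, c, PiLp.smul_apply, smul_eq_mul]
    field_simp

theorem exists_orthogonal_eq_mul_diagonal_sqrt_mul_transpose {M W : Matrix n n ℝ} {d : n → ℝ}
    (hW : W ∈ orthogonalGroup n ℝ) (hMM : Mᵀ * M = W * diagonal d * Wᵀ) :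
    ∃ U ∈ orthogonalGroup n ℝ, M = U * diagonal (fun i => √(d i)) * Wᵀ := by
  have hWW : Wᵀ * W = 1 := (mem_orthogonalGroup_iff' n ℝ).mp hW
  obtain ⟨U, hU, hMW⟩ := exists_orthogonal_eq_mul_diagonal_sqrt (C := M * W) (d := d) <| by
    rw [transpose_mul, mul_assoc, ← mul_assoc Mᵀ, hMM]
    simp only [← mul_assoc, hWW, one_mul]
    rw [mul_assoc, hWW, mul_one]
  refine ⟨U, hU, ?_⟩
  rw [← hMW, mul_assoc, (mem_orthogonalGroup_iff n ℝ).mp hW, mul_one]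

theorem exists_singular_value_decomposition (M : Matrix n n ℝ) :
    ∃ U ∈ orthogonalGroup n ℝ, ∃ W ∈ orthogonalGroup n ℝ, ∃ σ : n → ℝ, (∀ i, 0 ≤ σ i) ∧
      (Mᵀ * M).charpoly.roots = Finset.univ.val.map (fun i => σ i ^ 2) ∧
      M = U * diagonal σ * Wᵀ := by
  have hPSD : (Mᵀ * M).PosSemidef := by
    simpa using posSemidef_conjTranspose_mul_self M
  obtain ⟨W, hW, hMM⟩ : ∃ W ∈ orthogonalGroup n ℝ,
      Mᵀ * M = W * diagonal hPSD.isHermitian.eigenvalues * Wᵀ := by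
    refine ⟨_, hPSD.isHermitian.eigenvectorUnitary.2, ?_⟩
    simpa [Unitary.conjStarAlgAut_apply, star_eq_conjTranspose] using
      hPSD.isHermitian.spectral_theorem
  obtain ⟨U, hU, hM⟩ := exists_orthogonal_eq_mul_diagonal_sqrt_mul_transpose hW hMM
  refine ⟨U, hU, W, hW, _, fun i => Real.sqrt_nonneg _, ?_, hM⟩
  simp [hPSD.isHermitian.roots_charpoly_eq_eigenvalues, Real.sq_sqrt (hPSD.eigenvalues_nonneg _)]

theorem trace_mul_diagonal_le_sum {Q : Matrix n n ℝ} (hQ : Q ∈ orthogonalGroup n ℝ)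
    {σ : n → ℝ} (hσ : ∀ i, 0 ≤ σ i) : trace (Q * diagonal σ) ≤ ∑ i, σ i := by
  simp only [trace, diag, mul_diagonal]
  gcongr with i
  have hQii : Q i i ≤ 1 := (le_abs_self _).trans (entry_norm_bound_of_unitary hQ i i)
  exact mul_le_of_le_one_left (hσ i) hQii

theorem trace_mul_mul_diagonal_mul_transpose_le_sum {R U W : Matrix n n ℝ}
    (hR : R ∈ orthogonalGroup n ℝ) (hU : U ∈ orthogonalGroup n ℝ) (hW : W ∈ orthogonalGroup n ℝ)
    {σ : n → ℝ} (hσ : ∀ i, 0 ≤ σ i) : trace (R * (U * diagonal σ * Wᵀ)) ≤ ∑ i, σ i :=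
  calc trace (R * (U * diagonal σ * Wᵀ)) = trace (Wᵀ * R * U * diagonal σ) := by
        simp only [← mul_assoc]; rw [trace_mul_comm]; simp only [mul_assoc]
    _ ≤ ∑ i, σ i :=
        trace_mul_diagonal_le_sum (mul_mem (mul_mem (transpose_mem_orthogonalGroup hW) hR) hU) hσ

theorem exists_det_eq_neg_one_mul_diagonal_eq {σ : n → ℝ} {j : n} (hj : σ j = 0) :
    ∃ F ∈ orthogonalGroup n ℝ, F * diagonal σ = diagonal σ ∧ F.det = -1 := by
  refine ⟨diagonal (Function.update 1 j (-1)), ?_, ?_, ?_⟩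
  · rw [mem_orthogonalGroup_iff, diagonal_transpose, diagonal_mul_diagonal, ← diagonal_one]
    congr 1
    ext i
    rcases eq_or_ne i j with rfl | hij <;> simp [*]
  · rw [diagonal_mul_diagonal]
    congr 1
    ext i
    rcases eq_or_ne i j with rfl | hij <;> simp [*]
  · rw [det_diagonal, Finset.prod_update_of_mem (Finset.mem_univ j)]
    simp

theorem exists_mem_specialOrthogonalGroup_trace_mul_eq_sum {U W : Matrix n n ℝ}
    (hU : U ∈ orthogonalGroup n ℝ) (hW : W ∈ orthogonalGroup n ℝ) {σ : n → ℝ}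
    (hσ : ∀ i, 0 ≤ σ i) (hdet : 0 ≤ (U * diagonal σ * Wᵀ).det) :
    ∃ R ∈ specialOrthogonalGroup n ℝ, trace (R * (U * diagonal σ * Wᵀ)) = ∑ i, σ i := by
  suffices ∃ F ∈ orthogonalGroup n ℝ, F * diagonal σ = diagonal σ ∧ U.det * F.det * W.det = 1 by
    obtain ⟨F, hF, hFσ, hdetF⟩ := this
    refine ⟨W * F * Uᵀ, mem_specialOrthogonalGroup_iff.mpr
      ⟨mul_mem (mul_mem hW hF) (transpose_mem_orthogonalGroup hU), ?_⟩, ?_⟩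
    · rw [det_mul, det_mul, det_transpose, ← hdetF]
      ring
    · calc trace (W * F * Uᵀ * (U * diagonal σ * Wᵀ))
            = trace (Wᵀ * W * F * (Uᵀ * U) * diagonal σ) := by
              simp only [← mul_assoc]; rw [trace_mul_comm]; simp only [mul_assoc]
        _ = ∑ i, σ i := by
              rw [(mem_orthogonalGroup_iff' n ℝ).mp hW, (mem_orthogonalGroup_iff' n ℝ).mp hU,
                one_mul, mul_one, hFσ, trace_diagonal]
  have hUW := det_eq_one_or_neg_one_of_mem_orthogonalGroup
    (mul_mem hU (transpose_mem_orthogonalGroup hW))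
  rw [det_mul, det_transpose] at hUW
  rcases hUW with hUW | hUW
  · exact ⟨1, one_mem _, one_mul _, by rw [det_one, mul_one, hUW]⟩
  · have hprod : ∏ i, σ i = 0 := by
      rw [det_mul, det_mul, det_diagonal, det_transpose, mul_right_comm, hUW] at hdet
      exact le_antisymm (by linarith) (Finset.prod_nonneg fun i _ => hσ i)
    obtain ⟨j, -, hj⟩ := Finset.prod_eq_zero_iff.mp hprod
    obtain ⟨F, hF, hFσ, hdetF⟩ := exists_det_eq_neg_one_mul_diagonal_eq hj
    exact ⟨F, hF, hFσ, by rw [mul_right_comm, hUW, hdetF]; ring⟩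

end Matrix

open Matrix Polynomial

theorem max_tauM_det_nonneg_general (M : Matrix (Fin 3) (Fin 3) ℝ) (hM : 0 ≤ M.det)
    (μ₁ μ₂ μ₃ : ℝ)
    (hchar : (Mᵀ * M).charpoly = (X - C μ₁) * (X - C μ₂) * (X - C μ₃)) :
    (∀ R : Matrix (Fin 3) (Fin 3) ℝ, Rᵀ * R = 1 → R.det = 1 →
      Matrix.trace (R * M) ≤ Real.sqrt μ₁ + Real.sqrt μ₂ + Real.sqrt μ₃) ∧
    (∃ R : Matrix (Fin 3) (Fin 3) ℝ, Rᵀ * R = 1 ∧ R.det = 1 ∧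
      Matrix.trace (R * M) = Real.sqrt μ₁ + Real.sqrt μ₂ + Real.sqrt μ₃) := by
  obtain ⟨U, hU, W, hW, σ, hσ, hroots, rfl⟩ := exists_singular_value_decomposition M
  have hsum : ∑ i, σ i = √μ₁ + √μ₂ + √μ₃ := by
    have hsq : Finset.univ.val.map (fun i => σ i ^ 2) = {μ₁, μ₂, μ₃} := by
      rw [← hroots, hchar]
      simp [roots_mul, X_sub_C_ne_zero]
    simpa [Fin.sum_univ_three, Real.sqrt_sq (hσ _), add_assoc] using
      congrArg (fun s => (s.map Real.sqrt).sum) hsq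
  refine ⟨fun R hR _ => ?_, ?_⟩
  · rw [← hsum]
    exact trace_mul_mul_diagonal_mul_transpose_le_sum
      ((mem_orthogonalGroup_iff' _ _).mpr hR) hU hW hσ
  · obtain ⟨R, ⟨hR, hRdet⟩, htr⟩ := exists_mem_specialOrthogonalGroup_trace_mul_eq_sum hU hW hσ hM
    exact ⟨R, (mem_orthogonalGroup_iff' _ _).mp hR, hRdet, htr.trans hsum⟩

/-- For det M ≥ 0, the maximum of τ_M over SO(3) is √μ₁ + √μ₂ + √μ₃. -/
theorem max_tauM_det_nonneg (M : Matrix (Fin 3) (Fin 3) ℝ) (hM : 0 ≤ M.det)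
    (μ₁ μ₂ μ₃ : ℝ) (hμ : μ₁ ≥ μ₂ ∧ μ₂ ≥ μ₃ ∧ μ₃ ≥ 0)
    (hchar : (Mᵀ * M).charpoly = (X - C μ₁) * (X - C μ₂) * (X - C μ₃)) :
    (∀ R : Matrix (Fin 3) (Fin 3) ℝ, Rᵀ * R = 1 → R.det = 1 →
      Matrix.trace (R * M) ≤ Real.sqrt μ₁ + Real.sqrt μ₂ + Real.sqrt μ₃) ∧
    (∃ R : Matrix (Fin 3) (Fin 3) ℝ, Rᵀ * R = 1 ∧ R.det = 1 ∧
      Matrix.trace (R * M) = Real.sqrt μ₁ + Real.sqrt μ₂ + Real.sqrt μ₃) :=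
  max_tauM_det_nonneg_general M hM μ₁ μ₂ μ₃ hchar
end

section
/- Let M be a real 3×3 matrix with det M < 0, and let μ₁ ≥ μ₂ ≥ μ₃ > 0 be the eigenvalues of Mᵗ·M. Then Tr(R·M) ≤ √μ₁ + √μ₂ − √μ₃ for every R ∈ SO(3), and there exists R ∈ SO(3) for which equality holds; i.e. the maximum of τ_M over SO(3) equals √μ₁ + √μ₂ − √μ₃. -/
/-!
Write `M = W * diagonal s * Vᵀ` with `W`, `V` orthogonal and `s > 0`; the `sᵢ²` are the
eigenvalues of `Mᵀ * M`, and `det M < 0` forces `det W * det V = -1`. For `R ∈ SO(n)` the matrix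
`Q = Vᵀ * R * W` is orthogonal with `det Q = -1`, and `tr (R * M) = ∑ Qᵢᵢ sᵢ`. Every `Qᵢᵢ ≤ 1`, and
`tr Q ≤ n - 2`: composing `Q` with the reflection in a `(-1)`-eigenvector `u` gives an orthogonal
matrix of trace `tr Q + 2 ≤ n`. With `m = min sᵢ`,
`∑ Qᵢᵢ sᵢ = ∑ (Qᵢᵢ - 1) (sᵢ - m) + m tr Q + ∑ sᵢ - n m ≤ ∑ sᵢ - 2 m`,
with equality when `Q` is the coordinate reflection at an index where `s` is minimal.
-/

open Matrix Polynomial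

namespace Matrix

variable {n : Type*} [Fintype n] [DecidableEq n]

theorem diag_le_one_of_mem_orthogonalGroup {Q : Matrix n n ℝ} (hQ : Q ∈ orthogonalGroup n ℝ)
    (i : n) : Q i i ≤ 1 :=
  (abs_le.1 (entry_norm_bound_of_unitary hQ i i)).2

theorem trace_le_card_of_mem_orthogonalGroup {Q : Matrix n n ℝ}
    (hQ : Q ∈ orthogonalGroup n ℝ) : Q.trace ≤ Fintype.card n := by
  simpa [trace] using
    Finset.sum_le_sum fun i (_ : i ∈ Finset.univ) => diag_le_one_of_mem_orthogonalGroup hQ i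

theorem det_eq_one_or_neg_one_of_mem_orthogonalGroup_s15 {Q : Matrix n n ℝ}
    (hQ : Q ∈ orthogonalGroup n ℝ) : Q.det = 1 ∨ Q.det = -1 := by
  have h := congrArg det ((mem_orthogonalGroup_iff' _ _).1 hQ)
  rw [det_mul, det_transpose, det_one] at h
  exact mul_self_eq_one_iff.1 h

theorem exists_mulVec_eq_neg_of_det_eq_neg_one {Q : Matrix n n ℝ}
    (hQ : Q ∈ orthogonalGroup n ℝ) (hdet : Q.det = -1) :
    ∃ u : n → ℝ, u ⬝ᵥ u = 1 ∧ Q *ᵥ u = -u := by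
  have hsing : (1 + Q).det = 0 := by
    have h : Qᵀ * (1 + Q) = (1 + Q)ᵀ := by
      rw [mul_add, mul_one, (mem_orthogonalGroup_iff' _ _).1 hQ, transpose_add, transpose_one,
        add_comm]
    have := congrArg det h
    rw [det_mul, det_transpose, det_transpose, hdet] at this
    linarith
  obtain ⟨v, hv0, hv⟩ := exists_mulVec_eq_zero_iff.2 hsing
  have hvv : 0 < v ⬝ᵥ v := dotProduct_self_star_pos_iff.2 hv0
  refine ⟨(√(v ⬝ᵥ v))⁻¹ • v, ?_, ?_⟩
  · rw [smul_dotProduct, dotProduct_smul, smul_smul, smul_eq_mul, ← mul_inv, ← sq,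
      Real.sq_sqrt hvv.le, inv_mul_cancel₀ hvv.ne']
  · rw [add_mulVec, one_mulVec] at hv
    rw [mulVec_smul, eq_neg_of_add_eq_zero_right hv, smul_neg]

def householder (u : n → ℝ) : Matrix n n ℝ := 1 - (2 : ℝ) • vecMulVec u u

theorem householder_mem_orthogonalGroup {u : n → ℝ} (hu : u ⬝ᵥ u = 1) :
    householder u ∈ orthogonalGroup n ℝ := by
  rw [mem_orthogonalGroup_iff', householder, transpose_sub, transpose_one, transpose_smul,
    transpose_vecMulVec]
  simp only [sub_mul, mul_sub, one_mul, mul_one, smul_mul_smul, vecMulVec_mul_vecMulVec, hu,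
    one_smul]
  module

theorem det_householder {u : n → ℝ} (hu : u ⬝ᵥ u = 1) : (householder u).det = -1 := by
  rw [householder, sub_eq_add_neg, ← neg_smul, ← smul_vecMulVec, vecMulVec_eq Unit,
    det_one_add_replicateCol_mul_replicateRow, dotProduct_smul, hu]
  norm_num

theorem trace_householder_single_mul_diagonal (j : n) (s : n → ℝ) :
    (householder (Pi.single j 1) * diagonal s).trace = ∑ i, s i - 2 * s j := by
  simp [householder, sub_mul, vecMulVec_mul, trace_vecMulVec]

theorem mul_householder_of_mulVec_eq_neg {Q : Matrix n n ℝ} {u : n → ℝ} (hu : Q *ᵥ u = -u) :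
    Q * householder u = Q + (2 : ℝ) • vecMulVec u u := by
  rw [householder, mul_sub, mul_one, Matrix.mul_smul, mul_vecMulVec, hu, neg_vecMulVec, smul_neg,
    sub_neg_eq_add]

theorem trace_le_card_sub_two_of_det_eq_neg_one {Q : Matrix n n ℝ}
    (hQ : Q ∈ orthogonalGroup n ℝ) (hdet : Q.det = -1) : Q.trace ≤ Fintype.card n - 2 := by
  obtain ⟨u, hu, hQu⟩ := exists_mulVec_eq_neg_of_det_eq_neg_one hQ hdet
  have h := trace_le_card_of_mem_orthogonalGroup
    (Submonoid.mul_mem _ hQ (householder_mem_orthogonalGroup hu))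
  rw [mul_householder_of_mulVec_eq_neg hQu, trace_add, trace_smul, trace_vecMulVec, hu,
    smul_eq_mul] at h
  linarith

theorem trace_mul_diagonal_le {Q : Matrix n n ℝ} (hQ : Q ∈ orthogonalGroup n ℝ)
    (hdet : Q.det = -1) {s : n → ℝ} {m : ℝ} (hm : 0 ≤ m) (hms : ∀ i, m ≤ s i) :
    (Q * diagonal s).trace ≤ ∑ i, s i - 2 * m := by
  have hterm : ∀ i, Q i i * s i = (Q i i - 1) * (s i - m) + m * Q i i + (s i - m) := fun i => by
    ring
  have hneg : ∑ i, (Q i i - 1) * (s i - m) ≤ 0 := Finset.sum_nonpos fun i _ =>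
    mul_nonpos_of_nonpos_of_nonneg (sub_nonpos.2 (diag_le_one_of_mem_orthogonalGroup hQ i))
      (sub_nonneg.2 (hms i))
  have htr := mul_le_mul_of_nonneg_left (trace_le_card_sub_two_of_det_eq_neg_one hQ hdet) hm
  have hsplit : (Q * diagonal s).trace =
      ∑ i, (Q i i - 1) * (s i - m) + m * Q.trace + (∑ i, s i - Fintype.card n * m) := by
    simp only [trace, diag, mul_diagonal, hterm, Finset.sum_add_distrib, Finset.sum_sub_distrib,
      Finset.mul_sum]
    simp
  linarith

theorem exists_eq_mul_diagonal_mul_transpose {M : Matrix n n ℝ} (hM : M.det ≠ 0) :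
    ∃ W ∈ orthogonalGroup n ℝ, ∃ V ∈ orthogonalGroup n ℝ, ∃ s : n → ℝ,
      (∀ i, 0 < s i) ∧ M = W * diagonal s * Vᵀ := by
  have hP : (Mᵀ * M).PosDef := by
    simpa using PosDef.conjTranspose_mul_self M
      (mulVec_injective_iff_isUnit.2 ((isUnit_iff_isUnit_det M).2 hM.isUnit))
  set V : Matrix n n ℝ := hP.1.eigenvectorUnitary.1
  set e := hP.1.eigenvalues
  have hV : V ∈ orthogonalGroup n ℝ := hP.1.eigenvectorUnitary.2
  have hdiag : Vᵀ * (Mᵀ * M) * V = diagonal e := by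
    simpa [Unitary.conjStarAlgAut_star_apply, star_eq_conjTranspose] using
      hP.1.conjStarAlgAut_star_eigenvectorUnitary
  have he : ∀ i, 0 < e i := hP.eigenvalues_pos
  set s := fun i => √(e i)
  have hs : ∀ i, 0 < s i := fun i => Real.sqrt_pos.2 (he i)
  have hss : ∀ i, s i * s i = e i := fun i => Real.mul_self_sqrt (he i).le
  refine ⟨M * V * diagonal s⁻¹, ?_, V, hV, s, hs, ?_⟩
  · rw [mem_orthogonalGroup_iff', transpose_mul, transpose_mul, diagonal_transpose]
    calc diagonal s⁻¹ * (Vᵀ * Mᵀ) * (M * V * diagonal s⁻¹)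
        = diagonal s⁻¹ * (Vᵀ * (Mᵀ * M) * V) * diagonal s⁻¹ := by simp only [Matrix.mul_assoc]
      _ = 1 := by
        rw [hdiag, diagonal_mul_diagonal, diagonal_mul_diagonal, ← diagonal_one]
        congr 1
        ext i
        rw [Pi.inv_apply, ← hss]
        field_simp [(hs i).ne']
  · have hinv : diagonal s⁻¹ * diagonal s = 1 := by
      rw [diagonal_mul_diagonal, ← diagonal_one]
      exact congrArg diagonal (funext fun i => inv_mul_cancel₀ (hs i).ne')
    calc M = M * V * (diagonal s⁻¹ * diagonal s) * Vᵀ := by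
          rw [hinv, Matrix.mul_one, Matrix.mul_assoc, (mem_orthogonalGroup_iff _ _).1 hV,
            Matrix.mul_one]
      _ = _ := by simp only [Matrix.mul_assoc]

theorem charpoly_transpose_mul_self_eq_prod {W V : Matrix n n ℝ} (hW : W ∈ orthogonalGroup n ℝ)
    (hV : V ∈ orthogonalGroup n ℝ) (s : n → ℝ) :
    ((W * diagonal s * Vᵀ)ᵀ * (W * diagonal s * Vᵀ)).charpoly = ∏ i, (X - C (s i ^ 2)) := by
  have h : (W * diagonal s * Vᵀ)ᵀ * (W * diagonal s * Vᵀ) =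
      V * (diagonal (fun i => s i ^ 2) * Vᵀ) := by
    rw [transpose_mul, transpose_mul, transpose_transpose, diagonal_transpose]
    calc V * (diagonal s * Wᵀ) * (W * diagonal s * Vᵀ)
        = V * (diagonal s * (Wᵀ * W) * diagonal s * Vᵀ) := by simp only [Matrix.mul_assoc]
      _ = _ := by
        rw [(mem_orthogonalGroup_iff' _ _).1 hW, Matrix.mul_one, diagonal_mul_diagonal]
        simp only [sq]
  rw [h, charpoly_mul_comm, Matrix.mul_assoc, (mem_orthogonalGroup_iff' _ _).1 hV, Matrix.mul_one,
    charpoly_diagonal]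

theorem isGreatest_trace_mul_image_specialOrthogonalGroup {W V : Matrix n n ℝ}
    (hW : W ∈ orthogonalGroup n ℝ) (hV : V ∈ orthogonalGroup n ℝ) {s : n → ℝ}
    (hdet : (W * diagonal s * Vᵀ).det < 0) {j : n} (hj₀ : 0 ≤ s j) (hj : ∀ i, s j ≤ s i) :
    IsGreatest ((fun R => (R * (W * diagonal s * Vᵀ)).trace) '' specialOrthogonalGroup n ℝ)
      (∑ i, s i - 2 * s j) := by
  have hWV : W.det * V.det < 0 := by
    rw [det_mul, det_mul, det_transpose, det_diagonal, mul_right_comm, mul_comm] at hdet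
    exact neg_of_mul_neg_right hdet (Finset.prod_nonneg fun i _ => hj₀.trans (hj i))
  have hconj : ∀ R, (R * (W * diagonal s * Vᵀ)).trace = (Vᵀ * R * W * diagonal s).trace := by
    intro R
    rw [← Matrix.mul_assoc, ← Matrix.mul_assoc, trace_mul_comm]
    simp only [Matrix.mul_assoc]
  have hV' := (mem_orthogonalGroup_iff' _ _).1 hV
  have hW' := (mem_orthogonalGroup_iff' _ _).1 hW
  set H := householder (Pi.single j (1 : ℝ))
  have hH : Pi.single j (1 : ℝ) ⬝ᵥ Pi.single j 1 = 1 := by simp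
  constructor
  · have hO : V * H * Wᵀ ∈ orthogonalGroup n ℝ := Submonoid.mul_mem _
      (Submonoid.mul_mem _ hV (householder_mem_orthogonalGroup hH)) (Unitary.star_mem hW)
    have hpos : 0 < (V * H * Wᵀ).det := by
      rw [det_mul, det_mul, det_transpose, det_householder hH]
      linarith
    refine ⟨V * H * Wᵀ,
      mem_specialOrthogonalGroup_iff.2
        ⟨hO, (det_eq_one_or_neg_one_of_mem_orthogonalGroup_s15 hO).resolve_right (by linarith)⟩, ?_⟩
    calc (V * H * Wᵀ * (W * diagonal s * Vᵀ)).trace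
        = (Vᵀ * V * H * (Wᵀ * W) * diagonal s).trace := by
          rw [hconj]
          simp only [Matrix.mul_assoc]
      _ = ∑ i, s i - 2 * s j := by
          rw [hV', hW', Matrix.one_mul, Matrix.mul_one, trace_householder_single_mul_diagonal]
  · rintro _ ⟨R, hR, rfl⟩
    obtain ⟨hRO, hRdet⟩ := mem_specialOrthogonalGroup_iff.1 hR
    have hO : Vᵀ * R * W ∈ orthogonalGroup n ℝ :=
      Submonoid.mul_mem _ (Submonoid.mul_mem _ (Unitary.star_mem hV) hRO) hW
    have hneg : (Vᵀ * R * W).det < 0 := by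
      rw [det_mul, det_mul, det_transpose, hRdet]
      linarith
    exact (hconj R).trans_le <| trace_mul_diagonal_le hO
      ((det_eq_one_or_neg_one_of_mem_orthogonalGroup_s15 hO).resolve_left (by linarith)) hj₀ hj

end Matrix

theorem exists_forall_le_and_sum_sub_two_mul_eq_of_map_sq_eq {ι : Type*} [Fintype ι] {s : ι → ℝ}
    (hs : ∀ i, 0 ≤ s i) {μ₁ μ₂ μ₃ : ℝ} (h₁₂ : μ₂ ≤ μ₁) (h₂₃ : μ₃ ≤ μ₂)
    (h : Finset.univ.val.map (fun i => s i ^ 2) = {μ₁, μ₂, μ₃}) :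
    ∃ j, (∀ i, s j ≤ s i) ∧ ∑ i, s i - 2 * s j = √μ₁ + √μ₂ - √μ₃ := by
  have hsqrt : ∀ i, √(s i ^ 2) = s i := fun i => Real.sqrt_sq (hs i)
  have hsum : ∑ i, s i = √μ₁ + √μ₂ + √μ₃ := by
    calc ∑ i, s i = ((Finset.univ.val.map fun i => s i ^ 2).map Real.sqrt).sum := by
          simp only [Multiset.map_map, Function.comp_def, hsqrt, Finset.sum_eq_multiset_sum]
      _ = _ := by
          rw [h]
          simp only [Multiset.insert_eq_cons, Multiset.map_cons, Multiset.map_singleton,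
            Multiset.sum_cons, Multiset.sum_singleton]
          ring
  have hmem : ∀ i, s i ^ 2 = μ₁ ∨ s i ^ 2 = μ₂ ∨ s i ^ 2 = μ₃ := fun i => by
    have hi := Multiset.mem_map_of_mem (fun i => s i ^ 2) (Finset.mem_univ_val i)
    rw [h] at hi
    simpa using hi
  obtain ⟨j, -, hj⟩ : ∃ j ∈ Finset.univ.val, s j ^ 2 = μ₃ := Multiset.mem_map.1 (by simp [h])
  refine ⟨j, fun i => ?_, ?_⟩
  · rw [← hsqrt i, ← hsqrt j]
    apply Real.sqrt_le_sqrt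
    rcases hmem i with hi | hi | hi <;> linarith
  · rw [hsum, ← hsqrt j, hj]
    ring

/-- For det M < 0, the maximum of τ_M over SO(3) is √μ₁ + √μ₂ − √μ₃. -/
theorem max_tauM_det_neg (M : Matrix (Fin 3) (Fin 3) ℝ) (hM : M.det < 0)
    (μ₁ μ₂ μ₃ : ℝ) (hμ : μ₁ ≥ μ₂ ∧ μ₂ ≥ μ₃ ∧ μ₃ > 0)
    (hchar : (Mᵀ * M).charpoly = (X - C μ₁) * (X - C μ₂) * (X - C μ₃)) :
    (∀ R : Matrix (Fin 3) (Fin 3) ℝ, Rᵀ * R = 1 → R.det = 1 →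
      Matrix.trace (R * M) ≤ Real.sqrt μ₁ + Real.sqrt μ₂ - Real.sqrt μ₃) ∧
    (∃ R : Matrix (Fin 3) (Fin 3) ℝ, Rᵀ * R = 1 ∧ R.det = 1 ∧
      Matrix.trace (R * M) = Real.sqrt μ₁ + Real.sqrt μ₂ - Real.sqrt μ₃) := by
  obtain ⟨W, hW, V, hV, s, hs, rfl⟩ := exists_eq_mul_diagonal_mul_transpose hM.ne
  have hroots : Finset.univ.val.map (fun i => s i ^ 2) = {μ₁, μ₂, μ₃} := by
    have h := (charpoly_transpose_mul_self_eq_prod hW hV s).symm.trans hchar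
    rw [Finset.prod_eq_multiset_prod, ← Function.comp_def (fun a => X - C a), ← Multiset.map_map,
      show (X - C μ₁) * (X - C μ₂) * (X - C μ₃) =
          (({μ₁, μ₂, μ₃} : Multiset ℝ).map fun a => X - C a).prod by simp [mul_assoc]] at h
    simpa only [roots_multiset_prod_X_sub_C] using congrArg roots h
  obtain ⟨j, hj, hsum⟩ := exists_forall_le_and_sum_sub_two_mul_eq_of_map_sq_eq (fun i => (hs i).le)
    hμ.1 hμ.2.1 hroots
  have hG := isGreatest_trace_mul_image_specialOrthogonalGroup hW hV hM (hs j).le hj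
  rw [hsum] at hG
  refine ⟨fun R hR hdet => hG.2 ⟨R, ⟨(mem_orthogonalGroup_iff' _ _).2 hR, hdet⟩, rfl⟩, ?_⟩
  obtain ⟨R, ⟨hRO, hRdet⟩, htr⟩ := hG.1
  exact ⟨R, (mem_orthogonalGroup_iff' _ _).1 hRO, hRdet, htr⟩
end

section
/- Let M be a real 3×3 matrix with det M = 0, and let μ₁ ≥ μ₂ ≥ μ₃ = 0 be the eigenvalues of Mᵗ·M. If R₀ ∈ SO(3) is such that R₀·M is symmetric, then Tr(R₀·M) belongs to the list {√μ₁+√μ₂, √μ₁−√μ₂, −√μ₁+√μ₂, −√μ₁−√μ₂}. -/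
open Matrix Polynomial

private noncomputable def cvφ : ℝ[X] →+* ℝ[X] := eval₂RingHom Polynomial.C (X^2)
private noncomputable def cvψ : ℝ[X] →+* ℝ[X] := eval₂RingHom Polynomial.C (-X)

private lemma cv_fac (S : Matrix (Fin 3) (Fin 3) ℝ) :
    charmatrix S * ((X:ℝ[X]) • (1:Matrix (Fin 3) (Fin 3) ℝ[X]) + S.map C)
      = (X^2:ℝ[X]) • 1 - (S*S).map C := by
  rw [charmatrix]
  rw [show (C : ℝ →+* ℝ[X]).mapMatrix S = S.map C from rfl]
  rw [show Matrix.scalar (Fin 3) (X:ℝ[X]) = (X:ℝ[X]) • 1 by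
    simp [Matrix.scalar, smul_eq_diagonal_mul]]
  rw [sub_mul, Matrix.smul_mul, mul_add, mul_add, Matrix.one_mul, Matrix.mul_smul,
    Matrix.mul_one, ← Matrix.map_mul, smul_add, smul_smul, ← sq, Matrix.one_mul]
  abel

private lemma cv_mapφ (A : Matrix (Fin 3) (Fin 3) ℝ) :
    (charmatrix A).map cvφ = (X^2:ℝ[X]) • 1 - A.map C := by
  ext i j
  by_cases h : i = j
  · subst h; simp [charmatrix_apply_eq, cvφ, Matrix.one_apply]
  · simp [charmatrix_apply_ne _ _ _ h, cvφ, Matrix.one_apply_ne h]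

private lemma cv_mapψ (S : Matrix (Fin 3) (Fin 3) ℝ) :
    (charmatrix S).map cvψ = -((X:ℝ[X]) • 1 + S.map C) := by
  ext i j
  by_cases h : i = j
  · subst h; simp [charmatrix_apply_eq, cvψ, Matrix.one_apply]; ring
  · simp [charmatrix_apply_ne _ _ _ h, cvψ, Matrix.one_apply_ne h]

private lemma cv_cubic (p : ℝ[X]) (hd : p.natDegree = 3) (hm : p.Monic) :
    p = X^3 + C (p.coeff 2) * X^2 + C (p.coeff 1) * X + C (p.coeff 0) := by
  have h4 : p.natDegree < 4 := by omega
  have h3 : p.coeff 3 = 1 := by have := hm.coeff_natDegree; rwa [hd] at this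
  conv_lhs => rw [p.as_sum_range' 4 h4]
  simp only [Finset.sum_range_succ, Finset.sum_range_zero, h3,
    ← C_mul_X_pow_eq_monomial, Polynomial.C_1, mul_one]
  ring

/-- Critical values of τ_M when det M = 0. -/
theorem critical_values_det_zero (M : Matrix (Fin 3) (Fin 3) ℝ) (hM : M.det = 0)
    (μ₁ μ₂ μ₃ : ℝ) (hμ : μ₁ ≥ μ₂ ∧ μ₂ ≥ μ₃ ∧ μ₃ = 0)
    (hchar : (Mᵀ * M).charpoly = (X - C μ₁) * (X - C μ₂) * (X - C μ₃))
    (R₀ : Matrix (Fin 3) (Fin 3) ℝ) (hR : R₀ᵀ * R₀ = 1) (hRdet : R₀.det = 1)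
    (hsymm : (R₀ * M)ᵀ = R₀ * M) :
    Matrix.trace (R₀ * M) = Real.sqrt μ₁ + Real.sqrt μ₂ ∨
    Matrix.trace (R₀ * M) = Real.sqrt μ₁ - Real.sqrt μ₂ ∨
    Matrix.trace (R₀ * M) = -Real.sqrt μ₁ + Real.sqrt μ₂ ∨
    Matrix.trace (R₀ * M) = -Real.sqrt μ₁ - Real.sqrt μ₂ := by
  obtain ⟨h12, h23, h30⟩ := hμ
  set S := R₀ * M with hS
  -- S * S = Mᵀ * M
  have hSS : S * S = Mᵀ * M := by
    calc S * S = Sᵀ * S := by rw [hsymm]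
    _ = Mᵀ * (R₀ᵀ * R₀) * M := by
        rw [hS, Matrix.transpose_mul]
        noncomm_ring
    _ = Mᵀ * M := by rw [hR, Matrix.mul_one]
  -- the key polynomial identity
  have hdetψ : ((X:ℝ[X]) • (1:Matrix (Fin 3) (Fin 3) ℝ[X]) + S.map C).det
      = - cvψ S.charpoly := by
    have : ((X:ℝ[X]) • (1:Matrix (Fin 3) (Fin 3) ℝ[X]) + S.map C)
        = -((charmatrix S).map cvψ) := by rw [cv_mapψ, neg_neg]
    rw [this, Matrix.det_neg, show (charmatrix S).map cvψ = cvψ.mapMatrix (charmatrix S) from rfl,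
      ← RingHom.map_det]
    rw [show Fintype.card (Fin 3) = 3 from rfl]
    rw [show (charmatrix S).det = S.charpoly from rfl]
    ring
  have H : cvφ ((Mᵀ*M).charpoly) = S.charpoly * (- cvψ S.charpoly) := by
    rw [show cvφ ((Mᵀ*M).charpoly) = (cvφ.mapMatrix (charmatrix (Mᵀ*M))).det from
      (RingHom.map_det _ _), show cvφ.mapMatrix (charmatrix (Mᵀ*M)) = (charmatrix (Mᵀ*M)).map cvφ from rfl,
      cv_mapφ, ← hSS, ← cv_fac, Matrix.det_mul, hdetψ]
    rfl
  -- coefficients of charpoly of S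
  have hmonic : S.charpoly.Monic := Matrix.charpoly_monic S
  have hdeg : S.charpoly.natDegree = 3 := by
    simpa using Matrix.charpoly_natDegree_eq_dim S
  set c2 := S.charpoly.coeff 2 with hc2
  set c1 := S.charpoly.coeff 1 with hc1
  set c0 := S.charpoly.coeff 0 with hc0
  have hp : S.charpoly = X^3 + C c2 * X^2 + C c1 * X + C c0 := cv_cubic _ hdeg hmonic
  rw [hchar, hp] at H
  -- evaluate at 0, 1, 2
  have heval : ∀ x : ℝ,
      (x^2 - μ₁) * (x^2 - μ₂) * (x^2 - μ₃)
        = (x^3 + c2*x^2 + c1*x + c0) * (-((-x)^3 + c2*(-x)^2 + c1*(-x) + c0)) := by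
    intro x
    have := congrArg (Polynomial.eval x) H
    rw [show cvφ ((X - C μ₁) * (X - C μ₂) * (X - C μ₃))
        = ((X - C μ₁) * (X - C μ₂) * (X - C μ₃)).comp (X^2) from rfl, Polynomial.eval_comp] at this
    have hψ : cvψ (X^3 + C c2 * X^2 + C c1 * X + C c0)
        = (X^3 + C c2 * X^2 + C c1 * X + C c0).comp (-X) := rfl
    rw [hψ] at this
    simpa [Polynomial.eval_comp] using this
  have e0 := heval 0
  have e1 := heval 1
  have e2 := heval 2
  rw [h30] at e0 e1 e2
  have hc0' : c0 = 0 := by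
    have hsq : c0^2 = 0 := by linear_combination e0
    exact pow_eq_zero_iff (by norm_num) |>.mp hsq
  rw [hc0'] at e1 e2
  have hA1 : c2^2 = μ₁ + μ₂ + 2*c1 := by linear_combination (1/12)*e2 - (1/3)*e1
  have hA2 : c1^2 = μ₁ * μ₂ := by linear_combination (1/12)*e2 - (4/3)*e1
  -- trace
  have htr : Matrix.trace S = -c2 := by
    have := Matrix.trace_eq_neg_charpoly_coeff S
    simpa using this
  have hμ1 : (0:ℝ) ≤ μ₁ := by linarith
  have hμ2 : (0:ℝ) ≤ μ₂ := by linarith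
  set a := Real.sqrt μ₁ with ha
  set b := Real.sqrt μ₂ with hb
  have ha2 : a^2 = μ₁ := Real.sq_sqrt hμ1
  have hb2 : b^2 = μ₂ := Real.sq_sqrt hμ2
  have hcase : (c1 - a*b) * (c1 + a*b) = 0 := by
    linear_combination hA2 - μ₂*ha2 - a^2*hb2
  rw [htr]
  rcases mul_eq_zero.mp hcase with h | h
  · -- c1 = a*b
    have h1 : c1 = a*b := by linarith
    have : (c2 - (a+b)) * (c2 + (a+b)) = 0 := by
      linear_combination hA1 - ha2 - hb2 + 2*h1
    rcases mul_eq_zero.mp this with h' | h'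
    · right; right; right; linarith
    · left; linarith
  · have h1 : c1 = -(a*b) := by linarith
    have : (c2 - (a-b)) * (c2 + (a-b)) = 0 := by
      linear_combination hA1 - ha2 - hb2 + 2*h1
    rcases mul_eq_zero.mp this with h' | h'
    · right; right; left; linarith
    · right; left; linarith
end
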